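/- (Hessian of the temporal Godunov–Boillat potential at an equilibrium state.) Let Ῡ = (ψ̃₀, 0, θ̃₀, 0, 0, 0) be a state with ũ = 0, Σ̃ = 0, σ̃ = 0, q̃ = 0 and θ̃₀ < 0, and write θ = −1/θ̃₀, and p̂_θθ, p̂_θψ, p̂_ψψ for the second partial derivatives of p̂ evaluated at (θ, ψ̃₀). Then the second partial derivatives of X⁰ at Ῡ are: ∂²X⁰/∂ψ̃² = θ⁻¹p̂_ψψ; ∂²X⁰/∂ψ̃∂θ̃ = −p̂_ψ + θp̂_θψ; ∂²X⁰/∂θ̃² = θ³p̂_θθ; ∂²X⁰/∂ũ_j∂ũ_k = p̂_ψ δ_{jk}; ∂²X⁰/∂Σ̃_{jk}∂Σ̃_{lm} = τ₁θ⁻¹p̂_ψ δ_{jl}δ_{km}; ∂²X⁰/∂σ̃² = τ₂θ⁻¹p̂_ψ; ∂²X⁰/∂q̃_j∂q̃_k = τ₀θ⁻¹p̂_ψ δ_{jk}; and all mixed second partial derivatives between distinct blocks of variables other than the (ψ̃, θ̃) pair vanish at Ῡ. In particular the Hessian is block diagonal, with the blocks in the dissipative variables positive multiples of identity matrices. -/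

import Mathlib

noncomputable section

/-- The extended thermodynamical potential
`ψ(Υ) = ψ̃ + ½θ|ũ|² + ½τ₁‖Σ̃‖² + ½τ₂σ̃² + ½τ₀|q̃|²` with `θ = -1/θ̃`. -/
def psiVal (τ0 τ1 τ2 : ℝ) (ψt : ℝ) (ut : Fin 3 → ℝ) (θt : ℝ)
    (St : Matrix (Fin 3) (Fin 3) ℝ) (σt : ℝ) (qt : Fin 3 → ℝ) : ℝ :=
  ψt + (1/2) * (-1/θt) * (∑ i, (ut i)^2) + (1/2) * τ1 * (∑ j, ∑ k, (St j k)^2)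
    + (1/2) * τ2 * σt^2 + (1/2) * τ0 * (∑ i, (qt i)^2)

/-- The temporal Godunov–Boillat potential `X⁰(Υ) = p̂(θ, ψ(Υ))/θ`, `θ = -1/θ̃`. -/
def X0 (phat : ℝ × ℝ → ℝ) (τ0 τ1 τ2 : ℝ) (ψt : ℝ) (ut : Fin 3 → ℝ) (θt : ℝ)
    (St : Matrix (Fin 3) (Fin 3) ℝ) (σt : ℝ) (qt : Fin 3 → ℝ) : ℝ :=
  phat (-1/θt, psiVal τ0 τ1 τ2 ψt ut θt St σt qt) / (-1/θt)

/-- The spatial Godunov–Boillat potential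
`X¹(Υ) = p̂(θ, ψ(Υ)) ũ₁ + θ((Σ̃ũ)₁ + σ̃ũ₁ + q̃₁)`, `θ = -1/θ̃`. -/
def X1 (phat : ℝ × ℝ → ℝ) (τ0 τ1 τ2 : ℝ) (ψt : ℝ) (ut : Fin 3 → ℝ) (θt : ℝ)
    (St : Matrix (Fin 3) (Fin 3) ℝ) (σt : ℝ) (qt : Fin 3 → ℝ) : ℝ :=
  phat (-1/θt, psiVal τ0 τ1 τ2 ψt ut θt St σt qt) * ut 0
    + (-1/θt) * ((∑ j, St 0 j * ut j) + σt * ut 0 + qt 0)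

/-- Partial derivative `p̂_ψ` of `p̂` with respect to its second slot. -/
def pPsi (phat : ℝ × ℝ → ℝ) (a b : ℝ) : ℝ := deriv (fun s => phat (a, s)) b

/-- Partial derivative `p̂_θ` of `p̂` with respect to its first slot. -/
def pTheta (phat : ℝ × ℝ → ℝ) (a b : ℝ) : ℝ := deriv (fun t => phat (t, b)) a

/-!
At an equilibrium state, fixing `θ̃` turns `X⁰` into `y ↦ p̂(θ, y)/θ` composed with `ψ(Υ)`, and `ψ`
depends on each of `ũ, Σ̃, σ̃, q̃` only through squares. Hence `X⁰` is even in each of these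
variables separately, which kills every mixed partial across blocks. Inside a block the second
derivative of `G (c + α s² + β t² + γ s t)` at the origin is `γ G'(c)`, which produces the
multiples of the identity. The `(ψ̃, θ̃)` entries are the chain rule through `θ = -1/θ̃`, whose
derivative is `θ²`; in particular `d/dθ̃ [f(θ)/θ] = θ f'(θ) - f(θ)`.
-/

/-- No differentiability is needed: `deriv f 0 = 0` by convention if `f` is not differentiable. -/
theorem Function.Even.deriv_zero {F : Type*} [NormedAddCommGroup F] [NormedSpace ℝ F]
    {f : ℝ → F} (hf : Function.Even f) : deriv f 0 = 0 := by
  have h := deriv_comp_neg (f := f) (x := 0)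
  rw [show (fun x => f (-x)) = f from funext hf, neg_zero] at h
  have h2 : (2 : ℝ) • deriv f 0 = 0 := by rw [two_smul]; nth_rewrite 1 [h]; exact neg_add_cancel _
  exact (smul_eq_zero.mp h2).resolve_left two_ne_zero

theorem deriv_deriv_eq_zero_of_even {F : ℝ → ℝ → ℝ} (hF : ∀ s, Function.Even (F s)) (x : ℝ) :
    deriv (fun s => deriv (F s) 0) x = 0 := by
  simp only [fun s => (hF s).deriv_zero, deriv_const]

theorem hasDerivAt_neg_one_div {θ : ℝ} (hθ : θ ≠ 0) :
    HasDerivAt (fun t => -1 / t) ((-1 / θ) ^ 2) θ := by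
  have h : HasDerivAt (fun t => -t⁻¹) (-(-(θ ^ 2)⁻¹)) θ := (hasDerivAt_inv hθ).neg
  convert h using 1
  · funext t; rw [neg_div, one_div]
  · rw [div_pow, neg_one_sq, neg_neg, one_div]

theorem HasDerivAt.div_comp_neg_one_div {f : ℝ → ℝ} {f' θ : ℝ} (hθ : θ ≠ 0)
    (hf : HasDerivAt f f' (-1 / θ)) :
    HasDerivAt (fun t => f (-1 / t) / (-1 / t)) (-1 / θ * f' - f (-1 / θ)) θ := by
  have ha := hasDerivAt_neg_one_div hθ
  have h : HasDerivAt (fun t => f (-1 / t) / (-1 / t))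
      ((f' * (-1 / θ) ^ 2 * (-1 / θ) - f (-1 / θ) * (-1 / θ) ^ 2) / (-1 / θ) ^ 2) θ :=
    (hf.comp θ ha).div ha (by simpa using hθ)
  convert h using 1
  field_simp

theorem deriv_deriv_div_comp_neg_one_div {f : ℝ → ℝ} {θ : ℝ} (hθ : θ ≠ 0)
    (hf : Differentiable ℝ f) (hf' : DifferentiableAt ℝ (deriv f) (-1 / θ)) :
    deriv (deriv fun t => f (-1 / t) / (-1 / t)) θ = (-1 / θ) ^ 3 * deriv (deriv f) (-1 / θ) := by
  have hfirst : deriv (fun t => f (-1 / t) / (-1 / t))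
      =ᶠ[nhds θ] fun t => -1 / t * deriv f (-1 / t) - f (-1 / t) := by
    filter_upwards [eventually_ne_nhds hθ] with t ht
    exact ((hf _).hasDerivAt.div_comp_neg_one_div ht).deriv
  have ha := hasDerivAt_neg_one_div hθ
  have h : HasDerivAt (fun t => -1 / t * deriv f (-1 / t) - f (-1 / t))
      ((-1 / θ) ^ 2 * deriv f (-1 / θ) + -1 / θ * (deriv (deriv f) (-1 / θ) * (-1 / θ) ^ 2)
        - deriv f (-1 / θ) * (-1 / θ) ^ 2) θ :=
    (ha.mul (hf'.hasDerivAt.comp θ ha)).sub ((hf _).hasDerivAt.comp θ ha)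
  rw [hfirst.deriv_eq, h.deriv]
  ring

theorem deriv_deriv_comp_quadratic {G : ℝ → ℝ} (hG : Differentiable ℝ G) {c : ℝ}
    (hG' : DifferentiableAt ℝ (deriv G) c) (α β γ : ℝ) :
    deriv (fun s => deriv (fun t => G (c + α * s ^ 2 + β * t ^ 2 + γ * s * t)) 0) 0
      = γ * deriv G c := by
  have hinner (s : ℝ) :
      deriv (fun t => G (c + α * s ^ 2 + β * t ^ 2 + γ * s * t)) 0
        = deriv G (c + α * s ^ 2) * (γ * s) := by
    have hq : HasDerivAt (fun t => c + α * s ^ 2 + β * t ^ 2 + γ * s * t) (γ * s) 0 := by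
      have h := (((hasDerivAt_pow 2 (0 : ℝ)).const_mul β).const_add (c + α * s ^ 2)).fun_add
        ((hasDerivAt_id' (0 : ℝ)).const_mul (γ * s))
      exact h.congr_deriv (by simp)
    exact ((hG _).hasDerivAt.comp_of_eq 0 hq (by simp)).deriv
  have hq : HasDerivAt (fun s => c + α * s ^ 2) 0 0 := by
    simpa using ((hasDerivAt_pow 2 (0 : ℝ)).const_mul α).const_add c
  have hG'q : HasDerivAt (fun s => deriv G (c + α * s ^ 2)) (deriv (deriv G) c * 0) 0 :=
    hG'.hasDerivAt.comp_of_eq 0 hq (by simp)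
  have h : HasDerivAt (fun s => deriv G (c + α * s ^ 2) * (γ * s))
      (deriv (deriv G) c * 0 * (γ * 0) + deriv G (c + α * 0 ^ 2) * (γ * 1)) 0 :=
    hG'q.fun_mul ((hasDerivAt_id' (0 : ℝ)).const_mul γ)
  rw [funext hinner, h.deriv]
  simp
  ring

theorem sum_sq_single_add_single {ι : Type*} [Fintype ι] [DecidableEq ι] (i j : ι) (s t : ℝ) :
    ∑ x, (Pi.single i s + Pi.single j t : ι → ℝ) x ^ 2
      = s ^ 2 + t ^ 2 + 2 * (if i = j then 1 else 0) * s * t := by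
  simp only [Pi.add_apply, add_sq, Finset.sum_add_distrib]
  rcases eq_or_ne i j with rfl | hij
  · simp [Pi.single_apply, ite_pow, add_right_comm]
  · simp [Pi.single_apply, ite_pow, hij, hij.symm]

theorem sum_sq_matrix_single_add_single {m n : Type*} [Fintype m] [Fintype n] [DecidableEq m]
    [DecidableEq n] (i j : m) (k l : n) (s t : ℝ) :
    ∑ a, ∑ b, (Matrix.single i k s + Matrix.single j l t) a b ^ 2
      = s ^ 2 + t ^ 2 + 2 * ((if i = j then 1 else 0) * (if k = l then 1 else 0)) * s * t := by
  simp only [Matrix.add_apply, add_sq, Finset.sum_add_distrib]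
  rcases eq_or_ne i j with rfl | hij
  · rcases eq_or_ne k l with rfl | hkl
    · simp [Matrix.single_apply, ite_pow, ite_and, add_right_comm]
    · simp [Matrix.single_apply, ite_pow, ite_and, hkl]
  · simp [Matrix.single_apply, ite_pow, ite_and, hij]

section PartialDerivatives

variable {phat : ℝ × ℝ → ℝ}

theorem pPsi_eq_fderiv (hp : Differentiable ℝ phat) (a b : ℝ) :
    pPsi phat a b = fderiv ℝ phat (a, b) (0, 1) :=
  ((hp (a, b)).hasFDerivAt.comp_hasDerivAt b
    ((hasDerivAt_const b a).prodMk (hasDerivAt_id b))).deriv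

theorem pTheta_eq_fderiv (hp : Differentiable ℝ phat) (a b : ℝ) :
    pTheta phat a b = fderiv ℝ phat (a, b) (1, 0) :=
  ((hp (a, b)).hasFDerivAt.comp_hasDerivAt a
    ((hasDerivAt_id a).prodMk (hasDerivAt_const a b))).deriv

theorem differentiable_fderiv_apply (hp : ContDiff ℝ 2 phat) (v : ℝ × ℝ) :
    Differentiable ℝ fun x => fderiv ℝ phat x v :=
  ((hp.fderiv_right (by norm_num)).clm_apply contDiff_const).differentiable one_ne_zero

theorem differentiable_pPsi_left (hp : ContDiff ℝ 2 phat) (b : ℝ) :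
    Differentiable ℝ fun a => pPsi phat a b := by
  simp_rw [pPsi_eq_fderiv (hp.differentiable two_ne_zero)]
  exact (differentiable_fderiv_apply hp _).comp (differentiable_id.prodMk (differentiable_const b))

theorem differentiable_pPsi_right (hp : ContDiff ℝ 2 phat) (a : ℝ) :
    Differentiable ℝ (pPsi phat a) := by
  simp_rw [funext (pPsi_eq_fderiv (hp.differentiable two_ne_zero) a)]
  exact (differentiable_fderiv_apply hp _).comp ((differentiable_const a).prodMk differentiable_id)

theorem differentiable_pTheta_left (hp : ContDiff ℝ 2 phat) (b : ℝ) :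
    Differentiable ℝ fun a => pTheta phat a b := by
  simp_rw [pTheta_eq_fderiv (hp.differentiable two_ne_zero)]
  exact (differentiable_fderiv_apply hp _).comp (differentiable_id.prodMk (differentiable_const b))

theorem deriv_deriv_div_comp_quadratic (hp : ContDiff ℝ 2 phat) (a c α β γ : ℝ) :
    deriv (fun s => deriv (fun t => phat (a, c + α * s ^ 2 + β * t ^ 2 + γ * s * t) / a) 0) 0
      = γ * (pPsi phat a c / a) := by
  have hderiv : deriv (fun y => phat (a, y) / a) = fun y => pPsi phat a y / a :=
    funext fun y => deriv_div_const _
  have hd := hp.differentiable two_ne_zero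
  rw [deriv_deriv_comp_quadratic (G := fun y => phat (a, y) / a)
    ((hd.comp ((differentiable_const a).prodMk differentiable_id)).div_const a)
    (by rw [hderiv]; exact ((differentiable_pPsi_right hp a).div_const a) c), hderiv]

end PartialDerivatives

section X0

variable {phat : ℝ × ℝ → ℝ} {τ0 τ1 τ2 : ℝ}

theorem psiVal_equilibrium (ψ θ : ℝ) : psiVal τ0 τ1 τ2 ψ 0 θ 0 0 0 = ψ := by
  simp [psiVal]

variable (ψt θt σt : ℝ) (ut qt : Fin 3 → ℝ) (St : Matrix (Fin 3) (Fin 3) ℝ)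

theorem X0_neg_ut : X0 phat τ0 τ1 τ2 ψt (-ut) θt St σt qt = X0 phat τ0 τ1 τ2 ψt ut θt St σt qt := by
  simp [X0, psiVal]

theorem X0_neg_St : X0 phat τ0 τ1 τ2 ψt ut θt (-St) σt qt = X0 phat τ0 τ1 τ2 ψt ut θt St σt qt := by
  simp [X0, psiVal]

theorem X0_neg_σt : X0 phat τ0 τ1 τ2 ψt ut θt St (-σt) qt = X0 phat τ0 τ1 τ2 ψt ut θt St σt qt := by
  simp [X0, psiVal]

theorem X0_neg_qt : X0 phat τ0 τ1 τ2 ψt ut θt St σt (-qt) = X0 phat τ0 τ1 τ2 ψt ut θt St σt qt := by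
  simp [X0, psiVal]

end X0

section Hessian

variable {phat : ℝ × ℝ → ℝ} {τ0 τ1 τ2 : ℝ} {ψ0 θ0 : ℝ}

theorem X0_hessian_psi_psi :
    deriv (fun s : ℝ => deriv (fun t : ℝ => X0 phat τ0 τ1 τ2 t 0 θ0 0 0 0) s) ψ0
      = (-1/θ0)⁻¹ * deriv (fun s => pPsi phat (-1/θ0) s) ψ0 := by
  simp only [X0, psiVal_equilibrium, deriv_div_const]
  exact div_eq_inv_mul _ _

theorem X0_hessian_psi_theta (hp : ContDiff ℝ 2 phat) (hθ0 : θ0 ≠ 0) :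
    deriv (fun s : ℝ => deriv (fun t : ℝ => X0 phat τ0 τ1 τ2 t 0 s 0 0 0) ψ0) θ0
      = -pPsi phat (-1/θ0) ψ0 + (-1/θ0) * deriv (fun a => pPsi phat a ψ0) (-1/θ0) := by
  simp only [X0, psiVal_equilibrium, deriv_div_const]
  exact (((differentiable_pPsi_left hp ψ0) _).hasDerivAt.div_comp_neg_one_div hθ0).deriv.trans
    (by ring)

theorem X0_hessian_theta_theta (hp : ContDiff ℝ 2 phat) (hθ0 : θ0 ≠ 0) :
    deriv (fun s : ℝ => deriv (fun t : ℝ => X0 phat τ0 τ1 τ2 ψ0 0 t 0 0 0) s) θ0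
      = (-1/θ0)^3 * deriv (fun a => pTheta phat a ψ0) (-1/θ0) := by
  simp only [X0, psiVal_equilibrium]
  exact deriv_deriv_div_comp_neg_one_div hθ0
    ((hp.differentiable two_ne_zero).comp (differentiable_id.prodMk (differentiable_const ψ0)))
    (differentiable_pTheta_left hp ψ0 _)

theorem X0_hessian_u_u (hp : ContDiff ℝ 2 phat) (hθ0 : θ0 ≠ 0) (j k : Fin 3) :
    deriv (fun s : ℝ => deriv (fun t : ℝ => X0 phat τ0 τ1 τ2 ψ0
        (Pi.single j s + Pi.single k t) θ0 0 0 0) 0) 0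
      = pPsi phat (-1/θ0) ψ0 * (if j = k then 1 else 0) := by
  have hψ (s t : ℝ) : psiVal τ0 τ1 τ2 ψ0 (Pi.single j s + Pi.single k t) θ0 0 0 0
      = ψ0 + (-1/θ0) / 2 * s ^ 2 + (-1/θ0) / 2 * t ^ 2
        + (-1/θ0) * (if j = k then 1 else 0) * s * t := by
    rw [psiVal, sum_sq_single_add_single]
    simp only [Pi.zero_apply, Matrix.zero_apply, zero_pow two_ne_zero, Finset.sum_const_zero]
    ring
  simp only [X0, hψ]
  rw [deriv_deriv_div_comp_quadratic hp]
  field_simp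

theorem X0_hessian_S_S (hp : ContDiff ℝ 2 phat) (j k l m : Fin 3) :
    deriv (fun s : ℝ => deriv (fun t : ℝ => X0 phat τ0 τ1 τ2 ψ0 0 θ0
        (Matrix.single j k s + Matrix.single l m t) 0 0) 0) 0
      = τ1 * (-1/θ0)⁻¹ * pPsi phat (-1/θ0) ψ0
          * ((if j = l then 1 else 0) * (if k = m then 1 else 0)) := by
  have hψ (s t : ℝ) : psiVal τ0 τ1 τ2 ψ0 0 θ0 (Matrix.single j k s + Matrix.single l m t) 0 0
      = ψ0 + τ1 / 2 * s ^ 2 + τ1 / 2 * t ^ 2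
        + τ1 * ((if j = l then 1 else 0) * (if k = m then 1 else 0)) * s * t := by
    rw [psiVal, sum_sq_matrix_single_add_single]
    simp only [Pi.zero_apply, zero_pow two_ne_zero, Finset.sum_const_zero]
    ring
  simp only [X0, hψ]
  rw [deriv_deriv_div_comp_quadratic hp]
  ring

theorem X0_hessian_sigma_sigma (hp : ContDiff ℝ 2 phat) :
    deriv (fun s : ℝ => deriv (fun t : ℝ => X0 phat τ0 τ1 τ2 ψ0 0 θ0 0 t 0) s) 0
      = τ2 * (-1/θ0)⁻¹ * pPsi phat (-1/θ0) ψ0 := by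
  have hshift : deriv (fun t : ℝ => X0 phat τ0 τ1 τ2 ψ0 0 θ0 0 t 0)
      = fun s => deriv (fun t : ℝ => X0 phat τ0 τ1 τ2 ψ0 0 θ0 0 (s + t) 0) 0 :=
    funext fun s => by
      rw [deriv_comp_const_add (f := fun t => X0 phat τ0 τ1 τ2 ψ0 0 θ0 0 t 0), add_zero]
  have hψ (s t : ℝ) : psiVal τ0 τ1 τ2 ψ0 0 θ0 0 (s + t) 0
      = ψ0 + τ2 / 2 * s ^ 2 + τ2 / 2 * t ^ 2 + τ2 * s * t := by
    rw [psiVal]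
    simp only [Pi.zero_apply, Matrix.zero_apply, zero_pow two_ne_zero, Finset.sum_const_zero]
    ring
  rw [hshift]
  simp only [X0, hψ]
  rw [deriv_deriv_div_comp_quadratic hp]
  ring

theorem X0_hessian_q_q (hp : ContDiff ℝ 2 phat) (j k : Fin 3) :
    deriv (fun s : ℝ => deriv (fun t : ℝ => X0 phat τ0 τ1 τ2 ψ0 0 θ0 0 0
        (Pi.single j s + Pi.single k t)) 0) 0
      = τ0 * (-1/θ0)⁻¹ * pPsi phat (-1/θ0) ψ0 * (if j = k then 1 else 0) := by
  have hψ (s t : ℝ) : psiVal τ0 τ1 τ2 ψ0 0 θ0 0 0 (Pi.single j s + Pi.single k t)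
      = ψ0 + τ0 / 2 * s ^ 2 + τ0 / 2 * t ^ 2 + τ0 * (if j = k then 1 else 0) * s * t := by
    rw [psiVal, sum_sq_single_add_single]
    simp only [Pi.zero_apply, Matrix.zero_apply, zero_pow two_ne_zero, Finset.sum_const_zero]
    ring
  simp only [X0, hψ]
  rw [deriv_deriv_div_comp_quadratic hp]
  ring

end Hessian

theorem X0_hessian_at_equilibrium_general
    (phat : ℝ × ℝ → ℝ) (hp : ContDiff ℝ 2 phat)
    (τ0 τ1 τ2 : ℝ)
    (ψ0 θ0 : ℝ) (hθ0 : θ0 < 0) :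
    -- ∂²X⁰/∂ψ̃² = θ⁻¹ p̂_ψψ
    deriv (fun s : ℝ => deriv (fun t : ℝ => X0 phat τ0 τ1 τ2 t 0 θ0 0 0 0) s) ψ0
      = (-1/θ0)⁻¹ * deriv (fun s => pPsi phat (-1/θ0) s) ψ0
    -- ∂²X⁰/∂ψ̃∂θ̃ = -p̂_ψ + θ p̂_θψ
    ∧ deriv (fun s : ℝ => deriv (fun t : ℝ => X0 phat τ0 τ1 τ2 t 0 s 0 0 0) ψ0) θ0
      = -pPsi phat (-1/θ0) ψ0 + (-1/θ0) * deriv (fun a => pPsi phat a ψ0) (-1/θ0)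
    -- ∂²X⁰/∂θ̃² = θ³ p̂_θθ
    ∧ deriv (fun s : ℝ => deriv (fun t : ℝ => X0 phat τ0 τ1 τ2 ψ0 0 t 0 0 0) s) θ0
      = (-1/θ0)^3 * deriv (fun a => pTheta phat a ψ0) (-1/θ0)
    -- ∂²X⁰/∂ũ_j∂ũ_k = p̂_ψ δ_jk
    ∧ (∀ j k : Fin 3,
        deriv (fun s : ℝ => deriv (fun t : ℝ => X0 phat τ0 τ1 τ2 ψ0
            (Pi.single j s + Pi.single k t) θ0 0 0 0) 0) 0
          = pPsi phat (-1/θ0) ψ0 * (if j = k then 1 else 0))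
    -- ∂²X⁰/∂Σ̃_{jk}∂Σ̃_{lm} = τ₁θ⁻¹p̂_ψ δ_jl δ_km
    ∧ (∀ j k l m : Fin 3,
        deriv (fun s : ℝ => deriv (fun t : ℝ => X0 phat τ0 τ1 τ2 ψ0 0 θ0
            (Matrix.single j k s + Matrix.single l m t) 0 0) 0) 0
          = τ1 * (-1/θ0)⁻¹ * pPsi phat (-1/θ0) ψ0
              * ((if j = l then 1 else 0) * (if k = m then 1 else 0)))
    -- ∂²X⁰/∂σ̃² = τ₂θ⁻¹p̂_ψ
    ∧ deriv (fun s : ℝ => deriv (fun t : ℝ => X0 phat τ0 τ1 τ2 ψ0 0 θ0 0 t 0) s) 0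
        = τ2 * (-1/θ0)⁻¹ * pPsi phat (-1/θ0) ψ0
    -- ∂²X⁰/∂q̃_j∂q̃_k = τ₀θ⁻¹p̂_ψ δ_jk
    ∧ (∀ j k : Fin 3,
        deriv (fun s : ℝ => deriv (fun t : ℝ => X0 phat τ0 τ1 τ2 ψ0 0 θ0 0 0
            (Pi.single j s + Pi.single k t)) 0) 0
          = τ0 * (-1/θ0)⁻¹ * pPsi phat (-1/θ0) ψ0 * (if j = k then 1 else 0))
    -- mixed ψ̃–ũ
    ∧ (∀ k : Fin 3,
        deriv (fun s : ℝ => deriv (fun t : ℝ => X0 phat τ0 τ1 τ2 s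
            (Pi.single k t) θ0 0 0 0) 0) ψ0 = 0)
    -- mixed ψ̃–Σ̃
    ∧ (∀ k l : Fin 3,
        deriv (fun s : ℝ => deriv (fun t : ℝ => X0 phat τ0 τ1 τ2 s 0 θ0
            (Matrix.single k l t) 0 0) 0) ψ0 = 0)
    -- mixed ψ̃–σ̃
    ∧ deriv (fun s : ℝ => deriv (fun t : ℝ => X0 phat τ0 τ1 τ2 s 0 θ0 0 t 0) 0) ψ0 = 0
    -- mixed ψ̃–q̃
    ∧ (∀ k : Fin 3,
        deriv (fun s : ℝ => deriv (fun t : ℝ => X0 phat τ0 τ1 τ2 s 0 θ0 0 0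
            (Pi.single k t)) 0) ψ0 = 0)
    -- mixed θ̃–ũ
    ∧ (∀ k : Fin 3,
        deriv (fun s : ℝ => deriv (fun t : ℝ => X0 phat τ0 τ1 τ2 ψ0
            (Pi.single k t) s 0 0 0) 0) θ0 = 0)
    -- mixed θ̃–Σ̃
    ∧ (∀ k l : Fin 3,
        deriv (fun s : ℝ => deriv (fun t : ℝ => X0 phat τ0 τ1 τ2 ψ0 0 s
            (Matrix.single k l t) 0 0) 0) θ0 = 0)
    -- mixed θ̃–σ̃
    ∧ deriv (fun s : ℝ => deriv (fun t : ℝ => X0 phat τ0 τ1 τ2 ψ0 0 s 0 t 0) 0) θ0 = 0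
    -- mixed θ̃–q̃
    ∧ (∀ k : Fin 3,
        deriv (fun s : ℝ => deriv (fun t : ℝ => X0 phat τ0 τ1 τ2 ψ0 0 s 0 0
            (Pi.single k t)) 0) θ0 = 0)
    -- mixed ũ–Σ̃
    ∧ (∀ j k l : Fin 3,
        deriv (fun s : ℝ => deriv (fun t : ℝ => X0 phat τ0 τ1 τ2 ψ0
            (Pi.single j s) θ0 (Matrix.single k l t) 0 0) 0) 0 = 0)
    -- mixed ũ–σ̃
    ∧ (∀ j : Fin 3,
        deriv (fun s : ℝ => deriv (fun t : ℝ => X0 phat τ0 τ1 τ2 ψ0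
            (Pi.single j s) θ0 0 t 0) 0) 0 = 0)
    -- mixed ũ–q̃
    ∧ (∀ j k : Fin 3,
        deriv (fun s : ℝ => deriv (fun t : ℝ => X0 phat τ0 τ1 τ2 ψ0
            (Pi.single j s) θ0 0 0 (Pi.single k t)) 0) 0 = 0)
    -- mixed Σ̃–σ̃
    ∧ (∀ k l : Fin 3,
        deriv (fun s : ℝ => deriv (fun t : ℝ => X0 phat τ0 τ1 τ2 ψ0 0 θ0
            (Matrix.single k l s) t 0) 0) 0 = 0)
    -- mixed Σ̃–q̃
    ∧ (∀ k l m : Fin 3,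
        deriv (fun s : ℝ => deriv (fun t : ℝ => X0 phat τ0 τ1 τ2 ψ0 0 θ0
            (Matrix.single k l s) 0 (Pi.single m t)) 0) 0 = 0)
    -- mixed σ̃–q̃
    ∧ (∀ k : Fin 3,
        deriv (fun s : ℝ => deriv (fun t : ℝ => X0 phat τ0 τ1 τ2 ψ0 0 θ0 0 s
            (Pi.single k t)) 0) 0 = 0) := by
  have hθ0' := hθ0.ne
  refine ⟨X0_hessian_psi_psi, X0_hessian_psi_theta hp hθ0', X0_hessian_theta_theta hp hθ0',
    X0_hessian_u_u hp hθ0', X0_hessian_S_S hp, X0_hessian_sigma_sigma hp, X0_hessian_q_q hp,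
    ?_, ?_, ?_, ?_, ?_, ?_, ?_, ?_, ?_, ?_, ?_, ?_, ?_, ?_⟩ <;>
  intros <;>
  exact deriv_deriv_eq_zero_of_even (fun s t => by
    simp only [Pi.single_neg, ← Matrix.single_neg, X0_neg_ut, X0_neg_St, X0_neg_σt, X0_neg_qt]) _

/-- Hessian of the temporal Godunov–Boillat potential `X⁰` at an equilibrium
state `Ῡ = (ψ̃₀, 0, θ̃₀, 0, 0, 0)` with `θ̃₀ < 0`, `θ = -1/θ̃₀`:
`∂²X⁰/∂ψ̃² = θ⁻¹p̂_ψψ`, `∂²X⁰/∂ψ̃∂θ̃ = -p̂_ψ + θp̂_θψ`, `∂²X⁰/∂θ̃² = θ³p̂_θθ`,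
`∂²X⁰/∂ũ_j∂ũ_k = p̂_ψ δ_jk`, `∂²X⁰/∂Σ̃_{jk}∂Σ̃_{lm} = τ₁θ⁻¹p̂_ψ δ_jl δ_km`,
`∂²X⁰/∂σ̃² = τ₂θ⁻¹p̂_ψ`, `∂²X⁰/∂q̃_j∂q̃_k = τ₀θ⁻¹p̂_ψ δ_jk`, and all mixed second
partials between distinct blocks other than the `(ψ̃, θ̃)` pair vanish. -/
theorem X0_hessian_at_equilibrium
    (phat : ℝ × ℝ → ℝ) (hp : ContDiff ℝ 2 phat)
    (τ0 τ1 τ2 : ℝ) (hτ0 : 0 < τ0) (hτ1 : 0 < τ1) (hτ2 : 0 < τ2)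
    (ψ0 θ0 : ℝ) (hθ0 : θ0 < 0) :
    -- ∂²X⁰/∂ψ̃² = θ⁻¹ p̂_ψψ
    deriv (fun s : ℝ => deriv (fun t : ℝ => X0 phat τ0 τ1 τ2 t 0 θ0 0 0 0) s) ψ0
      = (-1/θ0)⁻¹ * deriv (fun s => pPsi phat (-1/θ0) s) ψ0
    -- ∂²X⁰/∂ψ̃∂θ̃ = -p̂_ψ + θ p̂_θψ
    ∧ deriv (fun s : ℝ => deriv (fun t : ℝ => X0 phat τ0 τ1 τ2 t 0 s 0 0 0) ψ0) θ0
      = -pPsi phat (-1/θ0) ψ0 + (-1/θ0) * deriv (fun a => pPsi phat a ψ0) (-1/θ0)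
    -- ∂²X⁰/∂θ̃² = θ³ p̂_θθ
    ∧ deriv (fun s : ℝ => deriv (fun t : ℝ => X0 phat τ0 τ1 τ2 ψ0 0 t 0 0 0) s) θ0
      = (-1/θ0)^3 * deriv (fun a => pTheta phat a ψ0) (-1/θ0)
    -- ∂²X⁰/∂ũ_j∂ũ_k = p̂_ψ δ_jk
    ∧ (∀ j k : Fin 3,
        deriv (fun s : ℝ => deriv (fun t : ℝ => X0 phat τ0 τ1 τ2 ψ0
            (Pi.single j s + Pi.single k t) θ0 0 0 0) 0) 0
          = pPsi phat (-1/θ0) ψ0 * (if j = k then 1 else 0))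
    -- ∂²X⁰/∂Σ̃_{jk}∂Σ̃_{lm} = τ₁θ⁻¹p̂_ψ δ_jl δ_km
    ∧ (∀ j k l m : Fin 3,
        deriv (fun s : ℝ => deriv (fun t : ℝ => X0 phat τ0 τ1 τ2 ψ0 0 θ0
            (Matrix.single j k s + Matrix.single l m t) 0 0) 0) 0
          = τ1 * (-1/θ0)⁻¹ * pPsi phat (-1/θ0) ψ0
              * ((if j = l then 1 else 0) * (if k = m then 1 else 0)))
    -- ∂²X⁰/∂σ̃² = τ₂θ⁻¹p̂_ψ
    ∧ deriv (fun s : ℝ => deriv (fun t : ℝ => X0 phat τ0 τ1 τ2 ψ0 0 θ0 0 t 0) s) 0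
        = τ2 * (-1/θ0)⁻¹ * pPsi phat (-1/θ0) ψ0
    -- ∂²X⁰/∂q̃_j∂q̃_k = τ₀θ⁻¹p̂_ψ δ_jk
    ∧ (∀ j k : Fin 3,
        deriv (fun s : ℝ => deriv (fun t : ℝ => X0 phat τ0 τ1 τ2 ψ0 0 θ0 0 0
            (Pi.single j s + Pi.single k t)) 0) 0
          = τ0 * (-1/θ0)⁻¹ * pPsi phat (-1/θ0) ψ0 * (if j = k then 1 else 0))
    -- mixed ψ̃–ũ
    ∧ (∀ k : Fin 3,
        deriv (fun s : ℝ => deriv (fun t : ℝ => X0 phat τ0 τ1 τ2 s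
            (Pi.single k t) θ0 0 0 0) 0) ψ0 = 0)
    -- mixed ψ̃–Σ̃
    ∧ (∀ k l : Fin 3,
        deriv (fun s : ℝ => deriv (fun t : ℝ => X0 phat τ0 τ1 τ2 s 0 θ0
            (Matrix.single k l t) 0 0) 0) ψ0 = 0)
    -- mixed ψ̃–σ̃
    ∧ deriv (fun s : ℝ => deriv (fun t : ℝ => X0 phat τ0 τ1 τ2 s 0 θ0 0 t 0) 0) ψ0 = 0
    -- mixed ψ̃–q̃
    ∧ (∀ k : Fin 3,
        deriv (fun s : ℝ => deriv (fun t : ℝ => X0 phat τ0 τ1 τ2 s 0 θ0 0 0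
            (Pi.single k t)) 0) ψ0 = 0)
    -- mixed θ̃–ũ
    ∧ (∀ k : Fin 3,
        deriv (fun s : ℝ => deriv (fun t : ℝ => X0 phat τ0 τ1 τ2 ψ0
            (Pi.single k t) s 0 0 0) 0) θ0 = 0)
    -- mixed θ̃–Σ̃
    ∧ (∀ k l : Fin 3,
        deriv (fun s : ℝ => deriv (fun t : ℝ => X0 phat τ0 τ1 τ2 ψ0 0 s
            (Matrix.single k l t) 0 0) 0) θ0 = 0)
    -- mixed θ̃–σ̃
    ∧ deriv (fun s : ℝ => deriv (fun t : ℝ => X0 phat τ0 τ1 τ2 ψ0 0 s 0 t 0) 0) θ0 = 0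
    -- mixed θ̃–q̃
    ∧ (∀ k : Fin 3,
        deriv (fun s : ℝ => deriv (fun t : ℝ => X0 phat τ0 τ1 τ2 ψ0 0 s 0 0
            (Pi.single k t)) 0) θ0 = 0)
    -- mixed ũ–Σ̃
    ∧ (∀ j k l : Fin 3,
        deriv (fun s : ℝ => deriv (fun t : ℝ => X0 phat τ0 τ1 τ2 ψ0
            (Pi.single j s) θ0 (Matrix.single k l t) 0 0) 0) 0 = 0)
    -- mixed ũ–σ̃
    ∧ (∀ j : Fin 3,
        deriv (fun s : ℝ => deriv (fun t : ℝ => X0 phat τ0 τ1 τ2 ψ0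
            (Pi.single j s) θ0 0 t 0) 0) 0 = 0)
    -- mixed ũ–q̃
    ∧ (∀ j k : Fin 3,
        deriv (fun s : ℝ => deriv (fun t : ℝ => X0 phat τ0 τ1 τ2 ψ0
            (Pi.single j s) θ0 0 0 (Pi.single k t)) 0) 0 = 0)
    -- mixed Σ̃–σ̃
    ∧ (∀ k l : Fin 3,
        deriv (fun s : ℝ => deriv (fun t : ℝ => X0 phat τ0 τ1 τ2 ψ0 0 θ0
            (Matrix.single k l s) t 0) 0) 0 = 0)
    -- mixed Σ̃–q̃
    ∧ (∀ k l m : Fin 3,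
        deriv (fun s : ℝ => deriv (fun t : ℝ => X0 phat τ0 τ1 τ2 ψ0 0 θ0
            (Matrix.single k l s) 0 (Pi.single m t)) 0) 0 = 0)
    -- mixed σ̃–q̃
    ∧ (∀ k : Fin 3,
        deriv (fun s : ℝ => deriv (fun t : ℝ => X0 phat τ0 τ1 τ2 ψ0 0 θ0 0 s
            (Pi.single k t)) 0) 0 = 0) :=
  X0_hessian_at_equilibrium_general phat hp τ0 τ1 τ2 ψ0 θ0 hθ0

end
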